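/- For the softened n-body Hamiltonian H in D spatial dimensions, each component of total angular momentum about the origin, R^{ABS}_{d d'}(q, p) = ∑_{i=1}^n (q_{i,d} p_{i,d'} − q_{i,d'} p_{i,d}) for 1 ≤ d < d' ≤ D, is a conserved quantity: {R^{ABS}_{d d'}, H}(q, p) = 0 for all (q, p) ∈ ℝ^(2nD). -/

import Mathlib

open scoped BigOperators

/-- Partial derivative of `F` with respect to the position coordinate `q_{i,d}`
on the n-body phase space `(Fin N → Fin D → ℝ) × (Fin N → Fin D → ℝ)`. -/
noncomputable def pderivQ {N D : ℕ}
    (F : (Fin N → Fin D → ℝ) × (Fin N → Fin D → ℝ) → ℝ)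
    (x : (Fin N → Fin D → ℝ) × (Fin N → Fin D → ℝ)) (i : Fin N) (d : Fin D) : ℝ :=
  deriv (fun t => F (Function.update x.1 i (Function.update (x.1 i) d t), x.2)) (x.1 i d)

/-- Partial derivative of `F` with respect to the momentum coordinate `p_{i,d}`. -/
noncomputable def pderivP {N D : ℕ}
    (F : (Fin N → Fin D → ℝ) × (Fin N → Fin D → ℝ) → ℝ)
    (x : (Fin N → Fin D → ℝ) × (Fin N → Fin D → ℝ)) (i : Fin N) (d : Fin D) : ℝ :=
  deriv (fun t => F (x.1, Function.update x.2 i (Function.update (x.2 i) d t))) (x.2 i d)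

/-- Poisson bracket on the n-body phase space:
`{F, G}(x) = ∑_{i,d} (∂F/∂q_{i,d} ∂G/∂p_{i,d} − ∂F/∂p_{i,d} ∂G/∂q_{i,d})`. -/
noncomputable def poisson {N D : ℕ}
    (F G : (Fin N → Fin D → ℝ) × (Fin N → Fin D → ℝ) → ℝ)
    (x : (Fin N → Fin D → ℝ) × (Fin N → Fin D → ℝ)) : ℝ :=
  ∑ i, ∑ d, (pderivQ F x i d * pderivP G x i d - pderivP F x i d * pderivQ G x i d)

/-- The softened n-body Hamiltonian in D spatial dimensions:
`H(q, p) = ∑ i ‖p_i‖²/(2 m_i) + ∑_{i ≠ j} G m_i m_j / √(‖q_i − q_j‖² + ε²)`. -/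
noncomputable def nbodyH {N D : ℕ} (m : Fin N → ℝ) (G ε : ℝ)
    (x : (Fin N → Fin D → ℝ) × (Fin N → Fin D → ℝ)) : ℝ :=
  (∑ i, (∑ d, (x.2 i d) ^ 2) / (2 * m i)) +
    ∑ i, ∑ j, if i ≠ j then
      G * m i * m j / Real.sqrt ((∑ d, (x.1 i d - x.1 j d) ^ 2) + ε ^ 2)
    else 0

/-!
The bracket `{R_{dd'}, H}` is the derivative of `H` along the infinitesimal rotation of every
`q_i` and every `p_i` in the `(d, d')`-plane. `H` is a function of the `‖p_i‖²` and of the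
`‖q_i - q_j‖²` only, so the two contributions vanish separately: the kinetic one is
`p_{i,d'} p_{i,d} / m_i - p_{i,d} p_{i,d'} / m_i = 0`, and the potential one is the total torque
of the central pair forces `c_{ij} (q_i - q_j)` with `c_{ij} = c_{ji}`, which is antisymmetric
under `i ↔ j`. The softening `ε > 0` makes the pair potential differentiable everywhere.
-/

open Function Finset

section Coordinates

variable {ι κ : Type*}

theorem hasDerivAt_update_update_apply [DecidableEq ι] [DecidableEq κ] (g : ι → κ → ℝ)
    (i : ι) (e : κ) (k : ι) (f : κ) (t : ℝ) :
    HasDerivAt (fun t => update g i (update (g i) e t) k f)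
      (if k = i then if f = e then 1 else 0 else 0) t := by
  rcases eq_or_ne k i with rfl | hk
  · simpa [Pi.single_apply] using hasDerivAt_pi.1 (hasDerivAt_update (g k) e t) f
  · simpa [hk] using hasDerivAt_const t (g k f)

noncomputable def kineticEnergy [Fintype ι] [Fintype κ] (m : ι → ℝ) (p : ι → κ → ℝ) : ℝ :=
  ∑ i, (∑ d, p i d ^ 2) / (2 * m i)

theorem hasDerivAt_kineticEnergy_update [Fintype ι] [Fintype κ] [DecidableEq ι]
    [DecidableEq κ] (m : ι → ℝ) (p : ι → κ → ℝ) (i : ι) (e : κ) :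
    HasDerivAt (fun t => kineticEnergy m (update p i (update (p i) e t))) (p i e / m i)
      (p i e) := by
  have h := HasDerivAt.fun_sum (u := univ) fun k _ => HasDerivAt.div_const
    (HasDerivAt.fun_sum (u := univ) fun f _ =>
      (hasDerivAt_update_update_apply p i e k f (p i e)).pow 2) (2 * m k)
  refine h.congr_deriv ?_
  simp only [update_eq_self, Nat.cast_ofNat, Nat.add_one_sub_one, pow_one, mul_ite, mul_one,
    mul_zero, sum_ite_irrel, sum_ite_eq', mem_univ, ↓reduceIte, sum_const_zero, ite_div, zero_div]
  exact mul_div_mul_left _ _ two_ne_zero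

def sqDist [Fintype κ] (q : ι → κ → ℝ) (i j : ι) : ℝ :=
  ∑ f, (q i f - q j f) ^ 2

theorem sqDist_nonneg [Fintype κ] (q : ι → κ → ℝ) (i j : ι) : 0 ≤ sqDist q i j :=
  sum_nonneg fun _ _ => sq_nonneg _

theorem sqDist_comm [Fintype κ] (q : ι → κ → ℝ) (i j : ι) : sqDist q i j = sqDist q j i :=
  sum_congr rfl fun _ _ => by ring

theorem hasDerivAt_sqDist_update [Fintype κ] [DecidableEq ι] [DecidableEq κ]
    (q : ι → κ → ℝ) (i : ι) (e : κ) (k j : ι) :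
    HasDerivAt (fun t => sqDist (update q i (update (q i) e t)) k j)
      (2 * (q k e - q j e) * ((if k = i then 1 else 0) - (if j = i then 1 else 0))) (q i e) := by
  have h := HasDerivAt.fun_sum (u := univ) fun f _ =>
    ((hasDerivAt_update_update_apply q i e k f (q i e)).sub
      (hasDerivAt_update_update_apply q i e j f (q i e))).pow 2
  refine h.congr_deriv ?_
  split_ifs <;> simp

end Coordinates

section PairPotential

variable {ι κ : Type*}

noncomputable def pairPotential [Fintype ι] [Fintype κ] (Φ : ι → ι → ℝ → ℝ)
    (q : ι → κ → ℝ) : ℝ :=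
  ∑ i, ∑ j, Φ i j (sqDist q i j)

noncomputable def pairForceCoeff [Fintype κ] (Φ : ι → ι → ℝ → ℝ) (q : ι → κ → ℝ)
    (i j : ι) : ℝ :=
  2 * (deriv (Φ i j) (sqDist q i j) + deriv (Φ j i) (sqDist q j i))

theorem pairForceCoeff_comm [Fintype κ] (Φ : ι → ι → ℝ → ℝ) (q : ι → κ → ℝ) (i j : ι) :
    pairForceCoeff Φ q i j = pairForceCoeff Φ q j i := by
  rw [pairForceCoeff, pairForceCoeff, add_comm]

theorem hasDerivAt_pairPotential_update [Fintype ι] [Fintype κ] [DecidableEq ι]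
    [DecidableEq κ] (Φ : ι → ι → ℝ → ℝ) (q : ι → κ → ℝ)
    (hΦ : ∀ k j, DifferentiableAt ℝ (Φ k j) (sqDist q k j)) (i : ι) (e : κ) :
    HasDerivAt (fun t => pairPotential Φ (update q i (update (q i) e t)))
      (∑ j, pairForceCoeff Φ q i j * (q i e - q j e)) (q i e) := by
  have h := HasDerivAt.fun_sum (u := univ) fun k _ => HasDerivAt.fun_sum (u := univ) fun j _ =>
    (hΦ k j).hasDerivAt.comp_of_eq (q i e) (hasDerivAt_sqDist_update q i e k j) (by simp)
  refine h.congr_deriv ?_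
  simp only [mul_sub, mul_ite, mul_one, mul_zero, sum_sub_distrib, sum_ite_irrel,
    sum_const_zero, sum_ite_eq', mem_univ, ↓reduceIte]
  simp only [← sum_sub_distrib]
  refine sum_congr rfl fun j _ => ?_
  rw [pairForceCoeff, sqDist_comm q j i]
  ring

theorem sum_torque_eq_zero_of_symm [Fintype ι] (c : ι → ι → ℝ) (hc : ∀ i j, c i j = c j i)
    (q : ι → κ → ℝ) (d d' : κ) :
    ∑ i, (q i d' * ∑ j, c i j * (q i d - q j d) - q i d * ∑ j, c i j * (q i d' - q j d')) =
      0 := by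
  have h_expand : ∑ i, (q i d' * ∑ j, c i j * (q i d - q j d)
      - q i d * ∑ j, c i j * (q i d' - q j d'))
      = ∑ i, ∑ j, c i j * (q i d * q j d' - q i d' * q j d) := by
    simp only [mul_sum, ← sum_sub_distrib]
    exact sum_congr rfl fun i _ => sum_congr rfl fun j _ => by ring
  have h_antisymm : ∑ i, ∑ j, c i j * (q i d * q j d' - q i d' * q j d)
      = -∑ i, ∑ j, c i j * (q i d * q j d' - q i d' * q j d) := by
    conv_lhs => rw [sum_comm]
    simp only [← sum_neg_distrib]
    exact sum_congr rfl fun j _ => sum_congr rfl fun i _ => by rw [hc]; ring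
  linarith

end PairPotential

section PhaseSpace

abbrev PhaseSpace (N D : ℕ) : Type := (Fin N → Fin D → ℝ) × (Fin N → Fin D → ℝ)

variable {N D : ℕ}

def angularMomentum (d d' : Fin D) (x : PhaseSpace N D) : ℝ :=
  ∑ i, (x.1 i d * x.2 i d' - x.1 i d' * x.2 i d)

theorem pderivQ_angularMomentum (d d' : Fin D) (x : PhaseSpace N D) (i : Fin N) (e : Fin D) :
    pderivQ (angularMomentum d d') x i e
      = (if d = e then x.2 i d' else 0) - (if d' = e then x.2 i d else 0) := by
  refine (HasDerivAt.fun_sum (u := univ) fun k _ =>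
    ((hasDerivAt_update_update_apply x.1 i e k d _).mul_const (x.2 k d')).sub
      ((hasDerivAt_update_update_apply x.1 i e k d' _).mul_const (x.2 k d))).deriv.trans ?_
  simp

theorem pderivP_angularMomentum (d d' : Fin D) (x : PhaseSpace N D) (i : Fin N) (e : Fin D) :
    pderivP (angularMomentum d d') x i e
      = (if d' = e then x.1 i d else 0) - (if d = e then x.1 i d' else 0) := by
  refine (HasDerivAt.fun_sum (u := univ) fun k _ =>
    ((hasDerivAt_update_update_apply x.2 i e k d' _).const_mul (x.1 k d)).sub
      ((hasDerivAt_update_update_apply x.2 i e k d _).const_mul (x.1 k d'))).deriv.trans ?_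
  simp

theorem poisson_angularMomentum (d d' : Fin D) (F : PhaseSpace N D → ℝ) (x : PhaseSpace N D) :
    poisson (angularMomentum d d') F x =
      ∑ i, (x.2 i d' * pderivP F x i d - x.2 i d * pderivP F x i d'
        + (x.1 i d' * pderivQ F x i d - x.1 i d * pderivQ F x i d')) := by
  refine sum_congr rfl fun i _ => ?_
  simp only [pderivQ_angularMomentum, pderivP_angularMomentum, sub_mul, ite_mul, zero_mul,
    sum_sub_distrib, sum_ite_eq, mem_univ, ↓reduceIte]
  ring

theorem pderivQ_separable (T V : (Fin N → Fin D → ℝ) → ℝ) (x : PhaseSpace N D) (i : Fin N)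
    (e : Fin D) :
    pderivQ (fun y => T y.2 + V y.1) x i e =
      deriv (fun t => V (update x.1 i (update (x.1 i) e t))) (x.1 i e) :=
  deriv_const_add (T x.2)

theorem pderivP_separable (T V : (Fin N → Fin D → ℝ) → ℝ) (x : PhaseSpace N D) (i : Fin N)
    (e : Fin D) :
    pderivP (fun y => T y.2 + V y.1) x i e =
      deriv (fun t => T (update x.2 i (update (x.2 i) e t))) (x.2 i e) :=
  deriv_add_const (V x.1)

theorem poisson_angularMomentum_kineticEnergy_add_pairPotential (m : Fin N → ℝ)
    (Φ : Fin N → Fin N → ℝ → ℝ) (hΦ : ∀ i j s, 0 ≤ s → DifferentiableAt ℝ (Φ i j) s)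
    (d d' : Fin D) (x : PhaseSpace N D) :
    poisson (angularMomentum d d') (fun y => kineticEnergy m y.2 + pairPotential Φ y.1) x =
      0 := by
  have hΦx : ∀ k j, DifferentiableAt ℝ (Φ k j) (sqDist x.1 k j) :=
    fun k j => hΦ k j _ (sqDist_nonneg x.1 k j)
  simp only [poisson_angularMomentum, pderivP_separable, pderivQ_separable,
    (hasDerivAt_kineticEnergy_update m x.2 _ _).deriv,
    (hasDerivAt_pairPotential_update Φ x.1 hΦx _ _).deriv]
  have h_kinetic : ∀ i, x.2 i d' * (x.2 i d / m i) - x.2 i d * (x.2 i d' / m i) = 0 :=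
    fun i => by ring
  simp only [h_kinetic, zero_add]
  exact sum_torque_eq_zero_of_symm _ (pairForceCoeff_comm Φ x.1) x.1 d d'

noncomputable def softenedPotential (m : Fin N → ℝ) (G ε : ℝ) (i j : Fin N) (s : ℝ) : ℝ :=
  if i ≠ j then G * m i * m j / Real.sqrt (s + ε ^ 2) else 0

theorem nbodyH_eq_kineticEnergy_add_pairPotential (m : Fin N → ℝ) (G ε : ℝ) :
    nbodyH (D := D) m G ε =
      fun x => kineticEnergy m x.2 + pairPotential (softenedPotential m G ε) x.1 :=
  rfl

theorem differentiableAt_softenedPotential (m : Fin N → ℝ) (G : ℝ) {ε : ℝ} (hε : 0 < ε)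
    (i j : Fin N) {s : ℝ} (hs : 0 ≤ s) :
    DifferentiableAt ℝ (softenedPotential m G ε i j) s := by
  unfold softenedPotential
  split_ifs
  · fun_prop (disch := positivity)
  · exact differentiableAt_const _

end PhaseSpace

theorem total_angular_momentum_conserved_general {N D : ℕ} (m : Fin N → ℝ)
    (G ε : ℝ) (hε : 0 < ε)
    (d d' : Fin D) :
    ∀ x : (Fin N → Fin D → ℝ) × (Fin N → Fin D → ℝ),
      poisson (fun y => ∑ i, (y.1 i d * y.2 i d' - y.1 i d' * y.2 i d))
        (nbodyH m G ε) x = 0 := by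
  intro x
  rw [nbodyH_eq_kineticEnergy_add_pairPotential]
  exact poisson_angularMomentum_kineticEnergy_add_pairPotential m _
    (fun i j _ hs => differentiableAt_softenedPotential m G hε i j hs) d d' x

/-- Each component of total angular momentum about the origin,
`R^ABS_{d d'}(q, p) = ∑ i (q_{i,d} p_{i,d'} − q_{i,d'} p_{i,d})` for `d < d'`, is a
conserved quantity of the softened n-body Hamiltonian: `{R^ABS_{d d'}, H} = 0`. -/
theorem total_angular_momentum_conserved {N D : ℕ} (m : Fin N → ℝ)
    (hm : ∀ i, 0 < m i) (G ε : ℝ) (hG : 0 < G) (hε : 0 < ε)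
    (d d' : Fin D) (hdd' : d < d') :
    ∀ x : (Fin N → Fin D → ℝ) × (Fin N → Fin D → ℝ),
      poisson (fun y => ∑ i, (y.1 i d * y.2 i d' - y.1 i d' * y.2 i d))
        (nbodyH m G ε) x = 0 :=
  total_angular_momentum_conserved_general m G ε hε d d'
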